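/- arXiv:2310.07662 — 6 statements merged into one kernel-verified Lean document; each statement's English description precedes it below -/
import Mathlib

section
/- Let A ∈ ℝ^{2n×2n} be symmetric positive definite and symplectic, partitioned into n×n blocks as A = [[A₁₁, A₁₂],[A₁₂ᵀ, A₂₂]], and let A₁₁ = L₁₁L₁₁ᵀ be the Cholesky factorization of A₁₁. Then A = L₁L₁ᵀ, where L₁ := [[L₁₁, 0],[(L₁₁⁻¹A₁₂)ᵀ, (L₁₁ᵀ)⁻¹]], and L₁ is symplectic. -/
open Matrix

/-- Spectral norm (ℓ² operator norm) of a real square matrix. -/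
noncomputable def specNorm {m : Type*} [Fintype m] [DecidableEq m] (M : Matrix m m ℝ) : ℝ :=
  ‖LinearMap.toContinuousLinearMap (Matrix.toEuclideanLin M)‖

/-- Frobenius norm of a real square matrix. -/
noncomputable def frobNorm {m : Type*} [Fintype m] (M : Matrix m m ℝ) : ℝ :=
  Real.sqrt (∑ i, ∑ j, (M i j) ^ 2)

/-- Spectral condition number κ₂(M) = ‖M⁻¹‖₂ ‖M‖₂. -/
noncomputable def cond2 {m : Type*} [Fintype m] [DecidableEq m] (M : Matrix m m ℝ) : ℝ :=
  specNorm M⁻¹ * specNorm M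

/-- Spectral radius of a real square matrix (via its complex spectrum). -/
noncomputable def specRad {m : Type*} [Fintype m] [DecidableEq m] (M : Matrix m m ℝ) : ℝ :=
  (spectralRadius ℂ (M.map (Complex.ofReal ·))).toReal

/-- Lower triangular predicate. -/
def LowerTri {k : ℕ} (M : Matrix (Fin k) (Fin k) ℝ) : Prop := ∀ i j, i < j → M i j = 0
/-- Upper triangular predicate. -/
def UpperTri {k : ℕ} (M : Matrix (Fin k) (Fin k) ℝ) : Prop := ∀ i j, j < i → M i j = 0
/-- Positive diagonal entries predicate. -/
def PosDiag {k : ℕ} (M : Matrix (Fin k) (Fin k) ℝ) : Prop := ∀ i, 0 < M i i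

/-- The standard symplectic matrix J = [[0, I], [-I, 0]]. -/
noncomputable def Jmat (n : ℕ) : Matrix (Fin n ⊕ Fin n) (Fin n ⊕ Fin n) ℝ :=
  fromBlocks 0 1 (-1) 0

/-- M is symplectic iff MᵀJM = J. -/
def IsSymplectic {n : ℕ} (M : Matrix (Fin n ⊕ Fin n) (Fin n ⊕ Fin n) ℝ) : Prop :=
  Mᵀ * Jmat n * M = Jmat n

/-- Ω(M) = MᵀJM − J, the loss of symplecticity. -/
noncomputable def Omega {n : ℕ} (M : Matrix (Fin n ⊕ Fin n) (Fin n ⊕ Fin n) ℝ) :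
    Matrix (Fin n ⊕ Fin n) (Fin n ⊕ Fin n) ℝ :=
  Mᵀ * Jmat n * M - Jmat n

/-- For A symmetric positive definite and symplectic with Cholesky factor L₁₁ of
A₁₁, we have A = L₁L₁ᵀ with L₁ = [[L₁₁,0],[(L₁₁⁻¹A₁₂)ᵀ,(L₁₁ᵀ)⁻¹]], and L₁ is symplectic. -/
theorem stmt1 {n : ℕ} (hn : 1 ≤ n)
    (A11 A12 A22 L11 : Matrix (Fin n) (Fin n) ℝ)
    (A : Matrix (Fin n ⊕ Fin n) (Fin n ⊕ Fin n) ℝ)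
    (hA : A = fromBlocks A11 A12 A12ᵀ A22)
    (hpd : A.PosDef) (hsymp : IsSymplectic A)
    (hlow : LowerTri L11) (hdiag : PosDiag L11) (hchol : A11 = L11 * L11ᵀ) :
    A = (fromBlocks L11 0 (L11⁻¹ * A12)ᵀ L11ᵀ⁻¹) * (fromBlocks L11 0 (L11⁻¹ * A12)ᵀ L11ᵀ⁻¹)ᵀ ∧
      IsSymplectic (fromBlocks L11 0 (L11⁻¹ * A12)ᵀ L11ᵀ⁻¹) := by
  have hdet : IsUnit L11.det := by
    have htri : L11.BlockTriangular OrderDual.toDual := fun i j h => hlow i j h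
    rw [Matrix.det_of_lowerTriangular L11 htri]
    exact isUnit_iff_ne_zero.mpr (Finset.prod_pos fun i _ => hdiag i).ne'
  set B := L11⁻¹ with hB
  have hLB : L11 * B = 1 := Matrix.mul_nonsing_inv _ hdet
  have hBL : B * L11 = 1 := Matrix.nonsing_inv_mul _ hdet
  have hLBt : L11ᵀ * Bᵀ = 1 := by rw [← Matrix.transpose_mul, hBL, Matrix.transpose_one]
  have hBLt : Bᵀ * L11ᵀ = 1 := by rw [← Matrix.transpose_mul, hLB, Matrix.transpose_one]
  have hInvT : (L11ᵀ)⁻¹ = Bᵀ := by rw [hB, ← Matrix.transpose_nonsing_inv]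
  have hAT : Aᵀ = A := by
    have := hpd.1
    rwa [Matrix.IsHermitian, Matrix.conjTranspose_eq_transpose_of_trivial] at this
  have hsymp' := hsymp
  rw [IsSymplectic, hAT, hA, Jmat, Matrix.fromBlocks_multiply, Matrix.fromBlocks_multiply,
    Matrix.fromBlocks_inj] at hsymp'
  obtain ⟨e1, e2, _, _⟩ := hsymp'
  simp only [mul_zero, mul_one, zero_add, add_zero, mul_neg_one, neg_mul] at e1 e2
  have h1 : A11 * A12ᵀ = A12 * A11 := by rwa [neg_add_eq_sub, sub_eq_zero] at e1
  have h2 : A11 * A22 = A12 * A12 + 1 := by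
    rwa [neg_add_eq_sub, sub_eq_iff_eq_add'] at e2
  -- cancellation helpers
  have r1 : ∀ X : Matrix (Fin n) (Fin n) ℝ, L11 * (B * X) = X := fun X => by
    rw [← mul_assoc, hLB, one_mul]
  have r2 : ∀ X : Matrix (Fin n) (Fin n) ℝ, B * (L11 * X) = X := fun X => by
    rw [← mul_assoc, hBL, one_mul]
  have r4 : ∀ X : Matrix (Fin n) (Fin n) ℝ, Bᵀ * (L11ᵀ * X) = X := fun X => by
    rw [← mul_assoc, hBLt, one_mul]
  -- A11 * (Bᵀ * B) = 1 and Bᵀ * B * A11 = 1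
  have hA11inv : A11 * (Bᵀ * B) = 1 := by
    rw [hchol, mul_assoc, ← mul_assoc L11ᵀ, hLBt, one_mul, hLB]
  have hinvA11 : Bᵀ * (B * A11) = 1 := by
    rw [hchol, ← mul_assoc B, hBL, one_mul, hBLt]
  -- key commutation: Bᵀ * (B * A12) = A12ᵀ * (Bᵀ * B)
  have hcomm : Bᵀ * (B * A12) = A12ᵀ * (Bᵀ * B) := by
    calc Bᵀ * (B * A12) = Bᵀ * (B * (A12 * (A11 * (Bᵀ * B)))) := by rw [hA11inv, mul_one]
    _ = Bᵀ * (B * (A12 * A11)) * (Bᵀ * B) := by simp only [mul_assoc]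
    _ = Bᵀ * (B * (A11 * A12ᵀ)) * (Bᵀ * B) := by rw [h1]
    _ = Bᵀ * (B * A11) * (A12ᵀ * (Bᵀ * B)) := by simp only [mul_assoc]
    _ = A12ᵀ * (Bᵀ * B) := by rw [hinvA11, one_mul]
  -- the (2,2) block identity
  have h22 : A22 = A12ᵀ * (Bᵀ * (B * A12)) + Bᵀ * B := by
    have : A22 = Bᵀ * (B * (A11 * A22)) := by
      rw [hchol, mul_assoc L11, r2, r4]
    rw [this, h2, mul_add, mul_add]
    congr 1
    · calc Bᵀ * (B * (A12 * A12)) = Bᵀ * (B * A12) * A12 := by simp only [mul_assoc]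
      _ = A12ᵀ * (Bᵀ * B) * A12 := by rw [hcomm]
      _ = A12ᵀ * (Bᵀ * (B * A12)) := by simp only [mul_assoc]
    · rw [mul_one]
  constructor
  · rw [hA, hInvT, Matrix.fromBlocks_transpose, Matrix.fromBlocks_multiply]
    simp only [Matrix.transpose_zero, Matrix.transpose_transpose, Matrix.mul_zero,
      Matrix.zero_mul, add_zero, zero_add, Matrix.transpose_mul]
    rw [Matrix.fromBlocks_inj]
    refine ⟨hchol, ?_, ?_, ?_⟩
    · rw [← mul_assoc, hLB, one_mul]
    · rw [mul_assoc, hBLt, mul_one]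
    · rw [h22]
      congr 1
      simp only [mul_assoc]
  · rw [IsSymplectic, hInvT, Jmat, Matrix.fromBlocks_transpose, Matrix.fromBlocks_multiply,
      Matrix.fromBlocks_multiply]
    simp only [Matrix.transpose_zero, Matrix.transpose_transpose, Matrix.mul_zero,
      Matrix.zero_mul, add_zero, zero_add, Matrix.mul_one, Matrix.one_mul,
      Matrix.transpose_mul, Matrix.mul_neg,
      Matrix.neg_mul, mul_neg_one, neg_mul, mul_one, one_mul, mul_zero, zero_mul]
    rw [Matrix.fromBlocks_inj]
    have hkey : L11ᵀ * (A12ᵀ * Bᵀ) = B * A12 * L11 := by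
      calc L11ᵀ * (A12ᵀ * Bᵀ) = B * (A11 * (A12ᵀ * Bᵀ)) := by rw [hchol, mul_assoc L11, r2]
      _ = B * (A11 * A12ᵀ) * Bᵀ := by simp only [mul_assoc]
      _ = B * (A12 * A11) * Bᵀ := by rw [h1]
      _ = B * A12 * (L11 * (L11ᵀ * Bᵀ)) := by rw [hchol]; simp only [mul_assoc]
      _ = B * A12 * L11 := by rw [hLBt, mul_one]
    refine ⟨by rw [hkey, neg_add_cancel], ?_, ?_, ?_⟩
    · exact hLBt
    · rw [hBL]
    · rfl
end

section
/- Let A ∈ ℝ^{2n×2n} be symmetric positive definite and symplectic, partitioned into n×n blocks as A = [[A₁₁, A₁₂],[A₁₂ᵀ, A₂₂]]. Then the Schur complement S := A₂₂ − A₁₂ᵀ A₁₁⁻¹ A₁₂ of A₁₁ in A satisfies S = A₁₁⁻¹. -/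
/-!
For `A = [[P, Q], [Qᵀ, S]]` with `P` symmetric, `AᵀJA = J` amounts to `P Qᵀ = Q P` and
`P S - Q Q = 1`. The first gives `Qᵀ P⁻¹ = P⁻¹ Q` and the second `S = P⁻¹ + P⁻¹ Q Q`, hence
`S - Qᵀ P⁻¹ Q = P⁻¹`. Mathlib's `Matrix.J` is `-Jmat n`, so these block relations come from
`SymplecticGroup.fromBlocks_mem_iff`.
-/

open Matrix

theorem Jmat_eq_neg_J (n : ℕ) : Jmat n = -J (Fin n) ℝ := by
  simp [Jmat, J, fromBlocks_neg]

theorem isSymplectic_iff_mem_symplecticGroup {n : ℕ}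
    {M : Matrix (Fin n ⊕ Fin n) (Fin n ⊕ Fin n) ℝ} :
    IsSymplectic M ↔ M ∈ symplecticGroup (Fin n) ℝ := by
  rw [SymplecticGroup.mem_iff', IsSymplectic, Jmat_eq_neg_J, Matrix.mul_neg, Matrix.neg_mul,
    neg_inj]

namespace SymplecticGroup

variable {l R : Type*} [Fintype l] [DecidableEq l] [CommRing R]

theorem sub_transpose_mul_inv_mul_eq_inv {P Q S : Matrix l l R}
    (hA : fromBlocks P Q Qᵀ S ∈ symplecticGroup l R) (hP : Pᵀ = P) (hdet : IsUnit P.det) :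
    S - Qᵀ * P⁻¹ * Q = P⁻¹ := by
  obtain ⟨hPQ, -, hPS⟩ := fromBlocks_mem_iff.1 hA
  rw [hP, transpose_transpose] at hPQ hPS
  have hQP : Qᵀ * P⁻¹ = P⁻¹ * Q :=
    calc Qᵀ * P⁻¹ = P⁻¹ * (P * Qᵀ) * P⁻¹ := by
          rw [← Matrix.mul_assoc, nonsing_inv_mul _ hdet, Matrix.one_mul]
      _ = P⁻¹ * Q := by
          rw [hPQ, Matrix.mul_assoc, Matrix.mul_assoc, mul_nonsing_inv _ hdet, Matrix.mul_one]
  have hS : S = P⁻¹ + P⁻¹ * (Q * Q) :=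
    calc S = P⁻¹ * (P * S) := by rw [← Matrix.mul_assoc, nonsing_inv_mul _ hdet, Matrix.one_mul]
      _ = P⁻¹ + P⁻¹ * (Q * Q) := by rw [eq_add_of_sub_eq hPS, Matrix.mul_add, Matrix.mul_one]
  rw [hS, hQP, Matrix.mul_assoc]
  abel

end SymplecticGroup

theorem stmt2_general {n : ℕ}
    (A11 A12 A22 : Matrix (Fin n) (Fin n) ℝ)
    (A : Matrix (Fin n ⊕ Fin n) (Fin n ⊕ Fin n) ℝ)
    (hA : A = fromBlocks A11 A12 A12ᵀ A22)
    (hpd : A.PosDef) (hsymp : IsSymplectic A) :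
    A22 - A12ᵀ * A11⁻¹ * A12 = A11⁻¹ := by
  subst hA
  have hA11 : A11.PosDef := hpd.submatrix Sum.inl_injective
  exact SymplecticGroup.sub_transpose_mul_inv_mul_eq_inv
    (isSymplectic_iff_mem_symplecticGroup.1 hsymp) (isHermitian_iff_isSymm.1 hA11.isHermitian)
    hA11.det_pos.ne'.isUnit

/-- For A symmetric positive definite and symplectic, the Schur complement
S = A₂₂ − A₁₂ᵀA₁₁⁻¹A₁₂ of A₁₁ in A equals A₁₁⁻¹. -/
theorem stmt2 {n : ℕ} (hn : 1 ≤ n)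
    (A11 A12 A22 : Matrix (Fin n) (Fin n) ℝ)
    (A : Matrix (Fin n ⊕ Fin n) (Fin n ⊕ Fin n) ℝ)
    (hA : A = fromBlocks A11 A12 A12ᵀ A22)
    (hpd : A.PosDef) (hsymp : IsSymplectic A) :
    A22 - A12ᵀ * A11⁻¹ * A12 = A11⁻¹ :=
  stmt2_general A11 A12 A22 A hA hpd hsymp
end

section
/- Let A ∈ ℝ^{2n×2n} be symmetric positive definite, partitioned into n×n blocks as A = [[A₁₁, A₁₂],[A₁₂ᵀ, A₂₂]], let A₁₁ = L₁₁L₁₁ᵀ be the Cholesky factorization of A₁₁, and let L₁ := [[L₁₁, 0],[(L₁₁⁻¹A₁₂)ᵀ, (L₁₁ᵀ)⁻¹]]. Then A + ΔA = L₁L₁ᵀ where ΔA = [[0, 0],[0, A₁₁⁻¹ − S]] with S := A₂₂ − A₁₂ᵀ A₁₁⁻¹ A₁₂, and moreover L₁L₁ᵀ = [[I, 0],[Wᵀ, I]] · [[A₁₁, 0],[0, A₁₁⁻¹]] · [[I, W],[0, I]] and A = [[I, 0],[Wᵀ, I]] · [[A₁₁, 0],[0, S]] · [[I, W],[0, I]],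 where W := A₁₁⁻¹ A₁₂. -/
/-!
A₁₁ = L₁₁L₁₁ᵀ with L₁₁ triangular with positive diagonal, so A₁₁ is symmetric and invertible.
Multiplying out, L₁L₁ᵀ = [[A₁₁, A₁₂], [A₁₂ᵀ, A₁₁⁻¹ + A₁₂ᵀA₁₁⁻¹A₁₂]]: it has the off-diagonal blocks
of A and Schur complement A₁₁⁻¹. Both factorizations are then the block LDLᵀ factorization of a
symmetric matrix with invertible leading block.
-/

open Matrix

section BlockCholesky

variable {m n R : Type*} [Fintype m] [Fintype n] [DecidableEq m] [DecidableEq n] [CommRing R]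

theorem fromBlocks_eq_ldlt_of_isSymm {A₁₁ : Matrix m m R} (hsymm : A₁₁.IsSymm)
    (hdet : IsUnit A₁₁.det) (A₁₂ : Matrix m n R) (A₂₂ : Matrix n n R) :
    fromBlocks A₁₁ A₁₂ A₁₂ᵀ A₂₂ =
      fromBlocks 1 0 (A₁₁⁻¹ * A₁₂)ᵀ 1 * fromBlocks A₁₁ 0 0 (A₂₂ - A₁₂ᵀ * A₁₁⁻¹ * A₁₂) *
        fromBlocks 1 (A₁₁⁻¹ * A₁₂) 0 1 := by
  let := invertibleOfIsUnitDet A₁₁ hdet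
  rw [fromBlocks_eq_of_invertible₁₁, invOf_eq_nonsing_inv, transpose_mul,
    transpose_nonsing_inv, hsymm.eq]

theorem fromBlocks_cholFactor_mul_transpose {L : Matrix m m R} (hL : IsUnit L.det)
    (B : Matrix m m R) :
    fromBlocks L 0 (L⁻¹ * B)ᵀ Lᵀ⁻¹ * (fromBlocks L 0 (L⁻¹ * B)ᵀ Lᵀ⁻¹)ᵀ =
      fromBlocks (L * Lᵀ) B Bᵀ ((L * Lᵀ)⁻¹ + Bᵀ * (L * Lᵀ)⁻¹ * B) := by
  have hLB : L * (L⁻¹ * B) = B := mul_nonsing_inv_cancel_left L B hL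
  have hLt : Lᵀ⁻¹ * Lᵀ = 1 := nonsing_inv_mul _ (by rwa [det_transpose])
  rw [fromBlocks_transpose, fromBlocks_multiply, Matrix.mul_inv_rev, transpose_nonsing_inv,
    transpose_transpose]
  simp only [transpose_zero, Matrix.mul_zero, Matrix.zero_mul, add_zero, transpose_mul (L⁻¹) B,
    transpose_nonsing_inv, transpose_transpose, Matrix.mul_assoc, hLB, hLt, Matrix.mul_one]
  rw [add_comm]

end BlockCholesky

theorem isUnit_det_of_lowerTri_of_posDiag {k : ℕ} {L : Matrix (Fin k) (Fin k) ℝ}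
    (hlow : LowerTri L) (hdiag : PosDiag L) : IsUnit L.det := by
  rw [det_of_isLowerTriangular L fun i j h => hlow i j h]
  exact (Finset.prod_pos fun i _ => hdiag i).ne'.isUnit

theorem stmt5_general {n : ℕ}
    (A11 A12 A22 L11 : Matrix (Fin n) (Fin n) ℝ)
    (A : Matrix (Fin n ⊕ Fin n) (Fin n ⊕ Fin n) ℝ)
    (hA : A = fromBlocks A11 A12 A12ᵀ A22)
    (hlow : LowerTri L11) (hdiag : PosDiag L11) (hchol : A11 = L11 * L11ᵀ) :
    A + fromBlocks 0 0 0 (A11⁻¹ - (A22 - A12ᵀ * A11⁻¹ * A12)) =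
        (fromBlocks L11 0 (L11⁻¹ * A12)ᵀ L11ᵀ⁻¹) *
          (fromBlocks L11 0 (L11⁻¹ * A12)ᵀ L11ᵀ⁻¹)ᵀ ∧
      (fromBlocks L11 0 (L11⁻¹ * A12)ᵀ L11ᵀ⁻¹) *
          (fromBlocks L11 0 (L11⁻¹ * A12)ᵀ L11ᵀ⁻¹)ᵀ =
        fromBlocks 1 0 (A11⁻¹ * A12)ᵀ 1 * fromBlocks A11 0 0 A11⁻¹ *
          fromBlocks 1 (A11⁻¹ * A12) 0 1 ∧
      A = fromBlocks 1 0 (A11⁻¹ * A12)ᵀ 1 *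
            fromBlocks A11 0 0 (A22 - A12ᵀ * A11⁻¹ * A12) *
          fromBlocks 1 (A11⁻¹ * A12) 0 1 := by
  have hL := isUnit_det_of_lowerTri_of_posDiag hlow hdiag
  have hsymm : A11.IsSymm := hchol ▸ isSymm_mul_transpose_self L11
  have hdet : IsUnit A11.det := by
    rw [hchol, det_mul, det_transpose]
    exact hL.mul hL
  have hL₁ := fromBlocks_cholFactor_mul_transpose hL A12
  rw [← hchol] at hL₁
  subst hA
  refine ⟨?_, ?_, fromBlocks_eq_ldlt_of_isSymm hsymm hdet A12 A22⟩
  · rw [hL₁, fromBlocks_add]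
    simp only [add_zero]
    congr 1
    abel
  · rw [hL₁, fromBlocks_eq_ldlt_of_isSymm hsymm hdet, add_sub_cancel_right]

/-- A + ΔA = L₁L₁ᵀ with ΔA = [[0,0],[0,A₁₁⁻¹−S]], and the block LDLᵀ
decompositions of L₁L₁ᵀ and of A. -/
theorem stmt5 {n : ℕ} (hn : 1 ≤ n)
    (A11 A12 A22 L11 : Matrix (Fin n) (Fin n) ℝ)
    (A : Matrix (Fin n ⊕ Fin n) (Fin n ⊕ Fin n) ℝ)
    (hA : A = fromBlocks A11 A12 A12ᵀ A22)
    (hpd : A.PosDef)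
    (hlow : LowerTri L11) (hdiag : PosDiag L11) (hchol : A11 = L11 * L11ᵀ) :
    A + fromBlocks 0 0 0 (A11⁻¹ - (A22 - A12ᵀ * A11⁻¹ * A12)) =
        (fromBlocks L11 0 (L11⁻¹ * A12)ᵀ L11ᵀ⁻¹) *
          (fromBlocks L11 0 (L11⁻¹ * A12)ᵀ L11ᵀ⁻¹)ᵀ ∧
      (fromBlocks L11 0 (L11⁻¹ * A12)ᵀ L11ᵀ⁻¹) *
          (fromBlocks L11 0 (L11⁻¹ * A12)ᵀ L11ᵀ⁻¹)ᵀ =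
        fromBlocks 1 0 (A11⁻¹ * A12)ᵀ 1 * fromBlocks A11 0 0 A11⁻¹ *
          fromBlocks 1 (A11⁻¹ * A12) 0 1 ∧
      A = fromBlocks 1 0 (A11⁻¹ * A12)ᵀ 1 *
            fromBlocks A11 0 0 (A22 - A12ᵀ * A11⁻¹ * A12) *
          fromBlocks 1 (A11⁻¹ * A12) 0 1 :=
  stmt5_general A11 A12 A22 L11 A hA hlow hdiag hchol
end

section
/- Let A ∈ ℝ^{2n×2n} be symmetric positive definite, partitioned into n×n blocks as A = [[A₁₁, A₁₂],[A₁₂ᵀ, A₂₂]], let A₁₁ = L₁₁L₁₁ᵀ be the Cholesky factorization of A₁₁, and let L₁ := [[L₁₁, 0],[(L₁₁⁻¹A₁₂)ᵀ, (L₁₁ᵀ)⁻¹]]. Then ‖L₁‖₂² ≤ ‖A‖₂ + ‖A₁₁⁻¹ − S‖₂, where S := A₂₂ − A₁₂ᵀ A₁₁⁻¹ A₁₂. -/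
open Matrix

/-! `L₁₁` is invertible, being triangular with positive diagonal. Writing `E := A₁₁⁻¹ - S`, a
block multiplication using `A₁₁⁻¹ = L₁₁⁻ᵀ L₁₁⁻¹` gives
`L₁ L₁ᵀ = A + diag(0, E)`. Hence `‖L₁‖₂² = ‖L₁ L₁ᵀ‖₂ ≤ ‖A‖₂ + ‖diag(0, E)‖₂`, and padding `E`
with zero blocks does not increase its spectral norm. -/

open scoped Matrix.Norms.L2Operator

namespace Matrix

variable {𝕜 : Type*} [RCLike 𝕜] {k l m n : Type*} [Fintype k] [DecidableEq k] [Fintype l]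
  [DecidableEq l] [Fintype m] [DecidableEq m] [Fintype n] [DecidableEq n]

lemma l2_opNorm_sq_eq_mul_transpose (M : Matrix m n ℝ) : ‖M‖ ^ 2 = ‖M * Mᵀ‖ := by
  rw [sq, ← l2_opNorm_conjTranspose M, ← l2_opNorm_conjTranspose_mul_self Mᴴ,
    conjTranspose_conjTranspose, conjTranspose_eq_transpose_of_trivial]

lemma l2_opNorm_one_le : ‖(1 : Matrix n n 𝕜)‖ ≤ 1 := by
  rw [← diagonal_one, l2_opNorm_diagonal]
  simpa using pi_norm_const_le (ι := n) (1 : 𝕜)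

lemma l2_opNorm_fromCols_zero_one_le : ‖fromCols (0 : Matrix l k 𝕜) (1 : Matrix l l 𝕜)‖ ≤ 1 := by
  set P := fromCols (0 : Matrix l k 𝕜) (1 : Matrix l l 𝕜)
  have hP : ‖P‖ * ‖P‖ ≤ 1 := by
    rw [← l2_opNorm_conjTranspose P, ← l2_opNorm_conjTranspose_mul_self Pᴴ,
      conjTranspose_conjTranspose, conjTranspose_fromCols_eq_fromRows_conjTranspose,
      fromCols_mul_fromRows]
    simpa using l2_opNorm_one_le
  nlinarith [norm_nonneg P]

lemma l2_opNorm_fromBlocks_zero_zero_zero_le (E : Matrix l l 𝕜) :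
    ‖fromBlocks (0 : Matrix k k 𝕜) 0 0 E‖ ≤ ‖E‖ := by
  set P := fromCols (0 : Matrix l k 𝕜) (1 : Matrix l l 𝕜)
  have hP : fromBlocks (0 : Matrix k k 𝕜) 0 0 E = Pᴴ * E * P := by
    rw [conjTranspose_fromCols_eq_fromRows_conjTranspose, fromRows_mul, fromRows_mul_fromCols]
    simp
  calc ‖fromBlocks (0 : Matrix k k 𝕜) 0 0 E‖ ≤ ‖Pᴴ‖ * ‖E‖ * ‖P‖ := by
        rw [hP]; exact (l2_opNorm_mul _ _).trans (by gcongr; exact l2_opNorm_mul _ _)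
    _ ≤ 1 * ‖E‖ * 1 := by
        rw [l2_opNorm_conjTranspose]; gcongr <;> exact l2_opNorm_fromCols_zero_one_le
    _ = ‖E‖ := by ring

end Matrix

lemma specNorm_eq_l2_opNorm {m : Type*} [Fintype m] [DecidableEq m] (M : Matrix m m ℝ) :
    specNorm M = ‖M‖ :=
  rfl

lemma LowerTri.det_pos {k : ℕ} {L : Matrix (Fin k) (Fin k) ℝ} (hlow : LowerTri L)
    (hdiag : PosDiag L) : 0 < L.det := by
  rw [det_of_isLowerTriangular L fun i j hij => hlow i j hij]
  exact Finset.prod_pos fun i _ => hdiag i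

lemma fromBlocks_cholesky_mul_transpose {R n : Type*} [CommRing R] [Fintype n] [DecidableEq n]
    {L : Matrix n n R} (hL : IsUnit L.det) (B C : Matrix n n R) :
    fromBlocks L 0 (L⁻¹ * B)ᵀ Lᵀ⁻¹ * (fromBlocks L 0 (L⁻¹ * B)ᵀ Lᵀ⁻¹)ᵀ =
      fromBlocks (L * Lᵀ) B Bᵀ C +
        fromBlocks 0 0 0 ((L * Lᵀ)⁻¹ - (C - Bᵀ * (L * Lᵀ)⁻¹ * B)) := by
  have hinv : L * L⁻¹ = 1 := mul_nonsing_inv L hL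
  have hgram : (L * Lᵀ)⁻¹ = Lᵀ⁻¹ * L⁻¹ := mul_inv_rev L Lᵀ
  rw [fromBlocks_transpose, fromBlocks_multiply, fromBlocks_add, transpose_transpose,
    ← transpose_nonsing_inv, transpose_transpose, hgram, transpose_mul, ← transpose_nonsing_inv]
  congr 1
  · simp
  · rw [← Matrix.mul_assoc, hinv]; simp
  · rw [Matrix.mul_assoc, ← transpose_mul, hinv]; simp
  · noncomm_ring

theorem stmt7_general {n : ℕ}
    (A11 A12 A22 L11 : Matrix (Fin n) (Fin n) ℝ)
    (A : Matrix (Fin n ⊕ Fin n) (Fin n ⊕ Fin n) ℝ)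
    (hA : A = fromBlocks A11 A12 A12ᵀ A22)
    (hlow : LowerTri L11) (hdiag : PosDiag L11) (hchol : A11 = L11 * L11ᵀ) :
    (specNorm (fromBlocks L11 0 (L11⁻¹ * A12)ᵀ L11ᵀ⁻¹)) ^ 2 ≤
      specNorm A + specNorm (A11⁻¹ - (A22 - A12ᵀ * A11⁻¹ * A12)) := by
  subst hA hchol
  have hL : IsUnit L11.det := (hlow.det_pos hdiag).ne'.isUnit
  simp only [specNorm_eq_l2_opNorm]
  rw [l2_opNorm_sq_eq_mul_transpose, fromBlocks_cholesky_mul_transpose hL _ A22]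
  exact (norm_add_le _ _).trans (add_le_add le_rfl (l2_opNorm_fromBlocks_zero_zero_zero_le _))

/-- ‖L₁‖₂² ≤ ‖A‖₂ + ‖A₁₁⁻¹ − S‖₂ for L₁ = [[L₁₁,0],[(L₁₁⁻¹A₁₂)ᵀ,(L₁₁ᵀ)⁻¹]]. -/
theorem stmt7 {n : ℕ} (hn : 1 ≤ n)
    (A11 A12 A22 L11 : Matrix (Fin n) (Fin n) ℝ)
    (A : Matrix (Fin n ⊕ Fin n) (Fin n ⊕ Fin n) ℝ)
    (hA : A = fromBlocks A11 A12 A12ᵀ A22)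
    (hpd : A.PosDef)
    (hlow : LowerTri L11) (hdiag : PosDiag L11) (hchol : A11 = L11 * L11ᵀ) :
    (specNorm (fromBlocks L11 0 (L11⁻¹ * A12)ᵀ L11ᵀ⁻¹)) ^ 2 ≤
      specNorm A + specNorm (A11⁻¹ - (A22 - A12ᵀ * A11⁻¹ * A12)) :=
  stmt7_general A11 A12 A22 L11 A hA hlow hdiag hchol
end

section
/- Let A ∈ ℝ^{2n×2n} be symmetric positive definite, partitioned into n×n blocks as A = [[A₁₁, A₁₂],[A₁₂ᵀ, A₂₂]], let A₁₁ = L₁₁L₁₁ᵀ be the Cholesky factorization, L₂₁ := (L₁₁⁻¹A₁₂)ᵀ, and S = U₂₂U₂₂ᵀ the Reverse Cholesky factorization of the Schur complement S := A₂₂ − A₁₂ᵀ A₁₁⁻¹ A₁₂. Set L₁ := [[L₁₁, 0],[L₂₁, (L₁₁ᵀ)⁻¹]] and L₂ := [[L₁₁, 0],[L₂₁, U₂₂]]. Then Ω(L₁) = [[L₁₁ᵀL₂₁ − L₂₁ᵀL₁₁, 0],[0, 0]] and Ω(L₂) = Ω(L₁) + [[0, L₁₁ᵀU₂₂ − I],[−(L₁₁ᵀU₂₂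 − I)ᵀ, 0]]. -/
open Matrix

lemma omegaBlocks {n : ℕ} (B C D : Matrix (Fin n) (Fin n) ℝ) :
    Omega (fromBlocks B 0 C D) =
      fromBlocks (Bᵀ*C - Cᵀ*B) (Bᵀ*D - 1) (1 - Dᵀ*B) 0 := by
  simp only [Omega, Jmat, sub_eq_add_neg, fromBlocks_transpose, fromBlocks_multiply,
    fromBlocks_neg, fromBlocks_add, transpose_zero, Matrix.mul_zero, Matrix.zero_mul,
    Matrix.mul_one, Matrix.mul_neg, Matrix.neg_mul, Matrix.one_mul, zero_add, add_zero]
  congr 1 <;> abel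

/-- Block formulas for Ω(L₁) and Ω(L₂), where L₁ = [[L₁₁,0],[L₂₁,(L₁₁ᵀ)⁻¹]] and
L₂ = [[L₁₁,0],[L₂₁,U₂₂]], L₂₁ = (L₁₁⁻¹A₁₂)ᵀ, A₁₁ = L₁₁L₁₁ᵀ Cholesky, S = U₂₂U₂₂ᵀ Reverse
Cholesky of the Schur complement. -/
theorem stmt14 {n : ℕ} (hn : 1 ≤ n)
    (A11 A12 A22 L11 U22 : Matrix (Fin n) (Fin n) ℝ)
    (A : Matrix (Fin n ⊕ Fin n) (Fin n ⊕ Fin n) ℝ)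
    (hA : A = fromBlocks A11 A12 A12ᵀ A22)
    (hpd : A.PosDef)
    (hlow : LowerTri L11) (hdiag : PosDiag L11) (hchol : A11 = L11 * L11ᵀ)
    (hupp : UpperTri U22) (hudiag : PosDiag U22)
    (hrev : A22 - A12ᵀ * A11⁻¹ * A12 = U22 * U22ᵀ) :
    Omega (fromBlocks L11 0 (L11⁻¹ * A12)ᵀ L11ᵀ⁻¹) =
        fromBlocks (L11ᵀ * (L11⁻¹ * A12)ᵀ - (L11⁻¹ * A12) * L11) 0 0 0 ∧
      Omega (fromBlocks L11 0 (L11⁻¹ * A12)ᵀ U22) =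
        Omega (fromBlocks L11 0 (L11⁻¹ * A12)ᵀ L11ᵀ⁻¹) +
          fromBlocks 0 (L11ᵀ * U22 - 1) (-(L11ᵀ * U22 - 1)ᵀ) 0 := by
  
  have hdet : IsUnit L11.det := by
    have h : L11.BlockTriangular OrderDual.toDual := fun i j h => hlow i j h
    rw [Matrix.det_of_lowerTriangular _ h]
    exact (Finset.prod_pos (fun i _ => hdiag i)).ne'.isUnit
  have h1 : L11ᵀ * L11ᵀ⁻¹ = 1 := mul_nonsing_inv _ (by simpa using hdet.ne_zero)
  have h2 : (L11ᵀ⁻¹)ᵀ * L11 = 1 := by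
    rw [← transpose_nonsing_inv, transpose_transpose]
    exact nonsing_inv_mul _ (by simpa using hdet.ne_zero)
  constructor
  · rw [omegaBlocks, h1, h2]
    simp
  · rw [omegaBlocks, omegaBlocks, h1, h2, fromBlocks_add]
    congr 1 <;> simp <;> abel
end

section
/- Let A ∈ ℝ^{2n×2n} be symmetric positive definite, partitioned into n×n blocks as A = [[A₁₁, A₁₂],[A₁₂ᵀ, A₂₂]], let A₁₁ = L₁₁L₁₁ᵀ be the Cholesky factorization, L₂₁ := (L₁₁⁻¹A₁₂)ᵀ, S := A₂₂ − A₁₂ᵀ A₁₁⁻¹ A₁₂, and S = U₂₂U₂₂ᵀ the Reverse Cholesky factorization of S. Set L₁ := [[L₁₁, 0],[L₂₁, (L₁₁ᵀ)⁻¹]] and L₂ := [[L₁₁, 0],[L₂₁, U₂₂]]. Then ‖Ω(L₁)‖₂ ≤ ‖Ω(L₂)‖₂ ≤ ‖Ω(L₁)‖₂ + ‖L₁₁ᵀU₂₂ − I‖₂. -/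
open Matrix

open scoped Matrix.Norms.L2Operator

section Stmt16Aux

variable {α β : Type*} [Fintype α] [Fintype β] [DecidableEq α] [DecidableEq β]

omit [DecidableEq α] in
lemma stmt16_euclid_norm_sq (v : EuclideanSpace ℝ α) : ‖v‖^2 = ∑ i, (v i)^2 := by
  rw [EuclideanSpace.norm_eq, Real.sq_sqrt (by positivity)]
  simp [Real.norm_eq_abs, sq_abs]

lemma stmt16_mulVec_sq_bound (E : Matrix α β ℝ) (y : β → ℝ) :
    ∑ i, ((E *ᵥ y) i)^2 ≤ ‖E‖^2 * ∑ j, (y j)^2 := by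
  have h := Matrix.l2_opNorm_mulVec E ((WithLp.equiv 2 (β → ℝ)).symm y)
  have h1 : ‖(EuclideanSpace.equiv α ℝ).symm (E *ᵥ (WithLp.equiv 2 (β → ℝ)).symm y : α → ℝ)‖^2
      = ∑ i, ((E *ᵥ y) i)^2 := by
    rw [stmt16_euclid_norm_sq]; rfl
  have h2 : ‖((WithLp.equiv 2 (β → ℝ)).symm y : EuclideanSpace ℝ β)‖^2 = ∑ j, (y j)^2 := by
    rw [stmt16_euclid_norm_sq]; rfl
  nlinarith [h, norm_nonneg ((EuclideanSpace.equiv α ℝ).symm (E *ᵥ (WithLp.equiv 2 (β → ℝ)).symm y : α → ℝ)), norm_nonneg E, norm_nonneg ((WithLp.equiv 2 (β → ℝ)).symm y : EuclideanSpace ℝ β), h1, h2]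

lemma stmt16_opNorm_le_of_sq (M : Matrix (α ⊕ β) (α ⊕ β) ℝ) (c : ℝ) (hc : 0 ≤ c)
    (h : ∀ x : (α ⊕ β) → ℝ, ∑ i, ((M *ᵥ x) i)^2 ≤ c^2 * ∑ i, (x i)^2) : ‖M‖ ≤ c := by
  rw [Matrix.l2_opNorm_def]
  apply ContinuousLinearMap.opNorm_le_bound _ hc
  intro x
  have hx : (LinearEquiv.trans toEuclideanLin LinearMap.toContinuousLinearMap M) x
      = (WithLp.equiv 2 ((α ⊕ β) → ℝ)).symm (M *ᵥ (WithLp.equiv 2 _) x) := rfl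
  rw [hx]
  have h1 : ‖((WithLp.equiv 2 ((α⊕β) → ℝ)).symm (M *ᵥ (WithLp.equiv 2 _) x) : EuclideanSpace ℝ (α⊕β))‖^2 = ∑ i, ((M *ᵥ (WithLp.equiv 2 _) x) i)^2 := stmt16_euclid_norm_sq _
  have h2 : ‖x‖^2 = ∑ i, ((WithLp.equiv 2 ((α⊕β) → ℝ) x) i)^2 := stmt16_euclid_norm_sq _
  have := h ((WithLp.equiv 2 _) x)
  nlinarith [norm_nonneg ((WithLp.equiv 2 ((α⊕β) → ℝ)).symm (M *ᵥ (WithLp.equiv 2 _) x) : EuclideanSpace ℝ (α⊕β)), norm_nonneg x, mul_nonneg hc (norm_nonneg x)]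

omit [DecidableEq α] in
lemma stmt16_sum_sq_nonneg (y : α → ℝ) : (0:ℝ) ≤ ∑ i, (y i)^2 := by positivity

lemma stmt16_norm_P_le_one : ‖(fromBlocks 1 0 0 0 : Matrix (α ⊕ β) (α ⊕ β) ℝ)‖ ≤ 1 := by
  apply stmt16_opNorm_le_of_sq _ _ zero_le_one
  intro x
  rw [fromBlocks_mulVec]
  simp only [Fintype.sum_sum_type, Sum.elim_inl, Sum.elim_inr, one_mulVec, zero_mulVec,
    add_zero, zero_add, Function.comp_apply, Pi.zero_apply, ne_eq, OfNat.ofNat_ne_zero,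
    not_false_eq_true, zero_pow, Finset.sum_const_zero]
  have := stmt16_sum_sq_nonneg (x ∘ Sum.inl)
  have := stmt16_sum_sq_nonneg (x ∘ Sum.inr)
  simp only [Function.comp_apply] at *
  nlinarith

lemma stmt16_norm_offdiag_le {k : Type*} [Fintype k] [DecidableEq k] (E : Matrix k k ℝ) :
    ‖(fromBlocks 0 E (-Eᵀ) 0 : Matrix (k ⊕ k) (k ⊕ k) ℝ)‖ ≤ ‖E‖ := by
  apply stmt16_opNorm_le_of_sq _ _ (norm_nonneg E)
  intro x
  rw [fromBlocks_mulVec]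
  simp only [Fintype.sum_sum_type, Sum.elim_inl, Sum.elim_inr, zero_mulVec, add_zero, zero_add,
    neg_mulVec, Pi.neg_apply, neg_sq, Function.comp_apply]
  have h1 := stmt16_mulVec_sq_bound E (x ∘ Sum.inr)
  have h2 := stmt16_mulVec_sq_bound Eᵀ (x ∘ Sum.inl)
  have hT : ‖Eᵀ‖ = ‖E‖ := by
    have := Matrix.l2_opNorm_conjTranspose E; simpa using this
  rw [hT] at h2
  simp only [Function.comp_apply] at *
  nlinarith [h1, h2]

end Stmt16Aux

lemma stmt16_omega_block {n : ℕ} (L11 L21 X : Matrix (Fin n) (Fin n) ℝ) :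
    Omega (fromBlocks L11 0 L21 X) =
      fromBlocks (L11ᵀ*L21 - L21ᵀ*L11) (L11ᵀ*X - 1) (1 - Xᵀ*L11) 0 := by
  simp only [Omega, Jmat, fromBlocks_transpose, transpose_zero, fromBlocks_multiply,
    Matrix.mul_zero, Matrix.zero_mul, Matrix.mul_one, Matrix.one_mul, Matrix.mul_neg,
    Matrix.neg_mul, add_zero, zero_add, fromBlocks_neg, fromBlocks_add, sub_eq_add_neg,
    fromBlocks_zero]
  abel

/-- ‖Ω(L₁)‖₂ ≤ ‖Ω(L₂)‖₂ ≤ ‖Ω(L₁)‖₂ + ‖L₁₁ᵀU₂₂ − I‖₂, with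
L₁ = [[L₁₁,0],[L₂₁,(L₁₁ᵀ)⁻¹]], L₂ = [[L₁₁,0],[L₂₁,U₂₂]], L₂₁ = (L₁₁⁻¹A₁₂)ᵀ,
A₁₁ = L₁₁L₁₁ᵀ Cholesky and S = U₂₂U₂₂ᵀ Reverse Cholesky of the Schur complement. -/
theorem stmt16 {n : ℕ} (hn : 1 ≤ n)
    (A11 A12 A22 L11 U22 : Matrix (Fin n) (Fin n) ℝ)
    (A : Matrix (Fin n ⊕ Fin n) (Fin n ⊕ Fin n) ℝ)
    (hA : A = fromBlocks A11 A12 A12ᵀ A22)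
    (hpd : A.PosDef)
    (hlow : LowerTri L11) (hdiag : PosDiag L11) (hchol : A11 = L11 * L11ᵀ)
    (hupp : UpperTri U22) (hudiag : PosDiag U22)
    (hrev : A22 - A12ᵀ * A11⁻¹ * A12 = U22 * U22ᵀ) :
    specNorm (Omega (fromBlocks L11 0 (L11⁻¹ * A12)ᵀ L11ᵀ⁻¹)) ≤
        specNorm (Omega (fromBlocks L11 0 (L11⁻¹ * A12)ᵀ U22)) ∧
      specNorm (Omega (fromBlocks L11 0 (L11⁻¹ * A12)ᵀ U22)) ≤
        specNorm (Omega (fromBlocks L11 0 (L11⁻¹ * A12)ᵀ L11ᵀ⁻¹)) +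
          specNorm (L11ᵀ * U22 - 1) := by
  set L21 := (L11⁻¹ * A12)ᵀ with hL21
  set C := L11ᵀ*L21 - L21ᵀ*L11 with hC
  set E := L11ᵀ * U22 - 1 with hE
  -- L11 is invertible
  have hdet : L11.det ≠ 0 := by
    rw [Matrix.det_of_lowerTriangular L11 (fun i j hij => hlow i j hij)]
    exact (Finset.prod_pos (fun i _ => hdiag i)).ne'
  have hdetT : L11ᵀ.det ≠ 0 := by rwa [Matrix.det_transpose]
  have hinv1 : L11ᵀ * L11ᵀ⁻¹ = 1 := Matrix.mul_nonsing_inv _ (Ne.isUnit hdetT)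
  have hinvT : (L11ᵀ⁻¹)ᵀ = L11⁻¹ := by
    rw [← Matrix.transpose_nonsing_inv, Matrix.transpose_transpose]
  have hinv2 : (L11ᵀ⁻¹)ᵀ * L11 = 1 := by rw [hinvT]; exact Matrix.nonsing_inv_mul _ (Ne.isUnit hdet)
  have hM1 : Omega (fromBlocks L11 0 L21 L11ᵀ⁻¹) = fromBlocks C 0 0 0 := by
    rw [stmt16_omega_block, hinv1, hinv2, sub_self]
  have hbl : (1 : Matrix (Fin n) (Fin n) ℝ) - U22ᵀ * L11 = -Eᵀ := by
    rw [hE, Matrix.transpose_sub, Matrix.transpose_mul, Matrix.transpose_transpose,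
      Matrix.transpose_one, neg_sub]
  have hM2 : Omega (fromBlocks L11 0 L21 U22) = fromBlocks C E (-Eᵀ) 0 := by
    rw [stmt16_omega_block, hbl]
  have hspec : ∀ (M : Matrix (Fin n ⊕ Fin n) (Fin n ⊕ Fin n) ℝ), specNorm M = ‖M‖ :=
    fun M => rfl
  have hspec' : ∀ (M : Matrix (Fin n) (Fin n) ℝ), specNorm M = ‖M‖ := fun M => rfl
  set P : Matrix (Fin n ⊕ Fin n) (Fin n ⊕ Fin n) ℝ := fromBlocks 1 0 0 0 with hP
  have hPMP : P * (fromBlocks C E (-Eᵀ) 0) * P = fromBlocks C 0 0 0 := by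
    rw [hP, fromBlocks_multiply, fromBlocks_multiply]
    simp
  constructor
  · rw [hspec, hspec, hM1, hM2, ← hPMP]
    have h1 : ‖P * (fromBlocks C E (-Eᵀ) 0) * P‖ ≤ ‖P * (fromBlocks C E (-Eᵀ) 0)‖ * ‖P‖ :=
      Matrix.l2_opNorm_mul _ _
    have h2 : ‖P * (fromBlocks C E (-Eᵀ) 0)‖ ≤ ‖P‖ * ‖fromBlocks C E (-Eᵀ) 0‖ :=
      Matrix.l2_opNorm_mul _ _
    have h3 : ‖P‖ ≤ 1 := stmt16_norm_P_le_one
    nlinarith [norm_nonneg P, norm_nonneg (fromBlocks C E (-Eᵀ) 0),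
      norm_nonneg (P * (fromBlocks C E (-Eᵀ) 0))]
  · rw [hspec, hspec, hspec', hM1, hM2]
    have hsum : (fromBlocks C E (-Eᵀ) 0 : Matrix (Fin n ⊕ Fin n) (Fin n ⊕ Fin n) ℝ)
        = fromBlocks C 0 0 0 + fromBlocks 0 E (-Eᵀ) 0 := by
      rw [fromBlocks_add]; simp
    rw [hsum]
    calc ‖fromBlocks C 0 0 0 + fromBlocks 0 E (-Eᵀ) 0‖
        ≤ ‖(fromBlocks C 0 0 0 : Matrix (Fin n ⊕ Fin n) (Fin n ⊕ Fin n) ℝ)‖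
          + ‖(fromBlocks 0 E (-Eᵀ) 0 : Matrix (Fin n ⊕ Fin n) (Fin n ⊕ Fin n) ℝ)‖ :=
          norm_add_le _ _
      _ ≤ ‖(fromBlocks C 0 0 0 : Matrix (Fin n ⊕ Fin n) (Fin n ⊕ Fin n) ℝ)‖ + ‖E‖ := by
          have := stmt16_norm_offdiag_le E; linarith
end
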